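/- Suppose a set π of primes is a disjoint union of subsets σ and τ, and a finite group G possesses a π-Hall subgroup H that is an internal direct product H = H_σ × H_τ, where H_σ is a σ-subgroup of G and H_τ is a τ-subgroup of G (H_σ and H_τ are subgroups, every element of H_σ commutes with every element of H_τ, and H is generated by H_σ and H_τ). If G satisfies D_π, then G satisfies both D_σ and D_τ. -/
import Mathlib


/-- `n` is a `π`-number: every prime dividing `n` lies in `π`. -/
def IsPiNumber (π : Set ℕ) (n : ℕ) : Prop :=
  ∀ p : ℕ, p.Prime → p ∣ n → p ∈ π

/-- `H` is a `π`-Hall subgroup of `G`: its order is a `π`-number and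
its index is a `π'`-number. -/
def IsHallSubgroup {G : Type*} [Group G] (π : Set ℕ) (H : Subgroup G) : Prop :=
  IsPiNumber π (Nat.card H) ∧ ∀ p : ℕ, p.Prime → p ∣ H.index → p ∉ π

/-- `G` satisfies `D_π`: it has a `π`-Hall subgroup `H` and every `π`-subgroup
of `G` is conjugate in `G` to a subgroup of `H`. -/
def SatisfiesD (G : Type*) [Group G] (π : Set ℕ) : Prop :=
  ∃ H : Subgroup G, IsHallSubgroup π H ∧
    ∀ K : Subgroup G, IsPiNumber π (Nat.card K) →
      ∃ g : G, ∀ x ∈ K, g * x * g⁻¹ ∈ H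

lemma pi_dvd {π : Set ℕ} {m n : ℕ} (h : IsPiNumber π n) (hmn : m ∣ n) :
    IsPiNumber π m := fun p hp hpd => h p hp (hpd.trans hmn)

lemma pi_eq_one {σ τ : Set ℕ} (hdisj : σ ∩ τ = ∅) {n : ℕ} (hn : n ≠ 0)
    (h1 : IsPiNumber σ n) (h2 : IsPiNumber τ n) : n = 1 := by
  by_contra h
  have hp := Nat.minFac_prime h
  have h1' := h1 _ hp (Nat.minFac_dvd n)
  have h2' := h2 _ hp (Nat.minFac_dvd n)
  exact absurd (Set.mem_inter h1' h2') (by rw [hdisj]; exact Set.notMem_empty _)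

lemma pi_coprime {π : Set ℕ} {m n : ℕ} (h1 : IsPiNumber π m)
    (h2 : ∀ p : ℕ, p.Prime → p ∣ n → p ∉ π) : Nat.Coprime m n := by
  by_contra h
  obtain ⟨p, hp, hpm, hpn⟩ := Nat.Prime.not_coprime_iff_dvd.mp h
  exact h2 p hp hpn (h1 p hp hpm)

lemma aux {G : Type*} [Group G] [Finite G] (π σ τ : Set ℕ)
    (hunion : σ ∪ τ = π) (hdisj : σ ∩ τ = ∅)
    (H Hσ Hτ : Subgroup G)
    (hH : IsHallSubgroup π H)
    (hHσ : IsPiNumber σ (Nat.card Hσ))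
    (hHτ : IsPiNumber τ (Nat.card Hτ))
    (hcomm : ∀ x ∈ Hσ, ∀ y ∈ Hτ, x * y = y * x)
    (hgen : Hσ ⊔ Hτ = H)
    (hDπ : SatisfiesD G π) : SatisfiesD G σ := by
  classical
  have hσπ : σ ⊆ π := hunion ▸ Set.subset_union_left
  have hτnotσ : ∀ p ∈ τ, p ∉ σ := by
    intro p hpτ hpσ
    exact absurd (Set.mem_inter hpσ hpτ) (by rw [hdisj]; exact Set.notMem_empty _)
  -- the multiplication hom Hσ × Hτ → G
  let f : Hσ × Hτ →* G :=
    { toFun := fun z => (z.1 : G) * (z.2 : G)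
      map_one' := by simp
      map_mul' := by
        rintro ⟨⟨a, ha⟩, ⟨b, hb⟩⟩ ⟨⟨c, hc⟩, ⟨d, hd⟩⟩
        have hcb := hcomm c hc b hb
        simp only [Prod.fst_mul, Prod.snd_mul, Subgroup.coe_mul, MulMemClass.mk_mul_mk]
        rw [mul_assoc, mul_assoc, ← mul_assoc c b, hcb, mul_assoc] }
  have hrange : f.range = H := by
    rw [← hgen]
    apply le_antisymm
    · rintro _ ⟨⟨x, y⟩, rfl⟩
      exact mul_mem (Subgroup.mem_sup_left x.2) (Subgroup.mem_sup_right y.2)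
    · rw [sup_le_iff]
      constructor
      · intro x hx; exact ⟨⟨⟨x, hx⟩, 1⟩, by simp [f]⟩
      · intro y hy; exact ⟨⟨1, ⟨y, hy⟩⟩, by simp [f]⟩
  have hdecomp : ∀ h ∈ H, ∃ x ∈ Hσ, ∃ y ∈ Hτ, h = x * y := by
    intro h hh
    rw [← hrange] at hh
    obtain ⟨⟨x, y⟩, rfl⟩ := hh
    exact ⟨x, x.2, y, y.2, rfl⟩
  -- order of elements of Hσ, Hτ
  have hordσ : ∀ x ∈ Hσ, IsPiNumber σ (orderOf x) := by
    intro x hx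
    have : orderOf (⟨x, hx⟩ : Hσ) ∣ Nat.card Hσ := orderOf_dvd_natCard _
    rw [Subgroup.orderOf_mk] at this
    exact pi_dvd hHσ this
  have hordτ : ∀ y ∈ Hτ, IsPiNumber τ (orderOf y) := by
    intro y hy
    have : orderOf (⟨y, hy⟩ : Hτ) ∣ Nat.card Hτ := orderOf_dvd_natCard _
    rw [Subgroup.orderOf_mk] at this
    exact pi_dvd hHτ this
  -- key: an element of H whose order is a σ-number lies in Hσ
  have hkey : ∀ h ∈ H, IsPiNumber σ (orderOf h) → h ∈ Hσ := by
    intro h hh hord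
    obtain ⟨x, hx, y, hy, rfl⟩ := hdecomp h hh
    have hc : Commute x y := hcomm x hx y hy
    have hcxh : Commute x⁻¹ (x * y) := ((Commute.refl x).mul_right hc).inv_left
    have hyord : orderOf y ∣ Nat.lcm (orderOf x⁻¹) (orderOf (x * y)) := by
      have := hcxh.orderOf_mul_dvd_lcm
      rwa [inv_mul_cancel_left] at this
    have hyσ : IsPiNumber σ (orderOf y) := by
      intro p hp hpd
      have := hpd.trans hyord
      rcases (Nat.Prime.dvd_mul hp).mp (this.trans (Nat.lcm_dvd_mul _ _)) with h1 | h1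
      · rw [orderOf_inv] at h1; exact hordσ x hx p hp h1
      · exact hord p hp h1
    have hy1 : orderOf y = 1 :=
      pi_eq_one hdisj (orderOf_pos y).ne' hyσ (hordτ y hy)
    rw [orderOf_eq_one_iff.mp hy1, mul_one]
    exact hx
  -- trivial intersection ⇒ f injective
  have hinj : Function.Injective f := by
    rw [injective_iff_map_eq_one]
    rintro ⟨⟨x, hx⟩, ⟨y, hy⟩⟩ hxy
    simp only [f, MonoidHom.coe_mk, OneHom.coe_mk] at hxy
    have hyx : y = x⁻¹ := eq_inv_of_mul_eq_one_left (by rw [← hxy, hcomm x hx y hy])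
    have hymem : y ∈ Hσ := hyx ▸ inv_mem hx
    have hy1 : orderOf y = 1 :=
      pi_eq_one hdisj (orderOf_pos y).ne' (hordσ y hymem) (hordτ y hy)
    have hy1' : y = 1 := orderOf_eq_one_iff.mp hy1
    have hx1 : x = 1 := by rw [hy1', mul_one] at hxy; exact hxy
    simp [Prod.ext_iff, Subtype.ext_iff, hx1, hy1']
  have hcardH : Nat.card H = Nat.card Hσ * Nat.card Hτ := by
    have e1 : Nat.card (Hσ × Hτ) = Nat.card f.range :=
      Nat.card_congr (Equiv.ofInjective f hinj)
    rw [hrange] at e1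
    rw [← e1, Nat.card_prod]
  have hσle : Hσ ≤ H := hgen ▸ le_sup_left
  -- Hall property of Hσ
  have hHallσ : IsHallSubgroup σ Hσ := by
    refine ⟨hHσ, ?_⟩
    intro p hp hpd hpσ
    rw [← Subgroup.relIndex_mul_index hσle] at hpd
    have hrel : Hσ.relIndex H = Nat.card Hτ := by
      have h1 : Nat.card (Hσ.subgroupOf H) * (Hσ.subgroupOf H).index = Nat.card H :=
        Subgroup.card_mul_index _
      have h2 : Nat.card (Hσ.subgroupOf H) = Nat.card Hσ :=
        Nat.card_congr (Subgroup.subgroupOfEquivOfLe hσle).toEquiv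
      have hpos : 0 < Nat.card Hσ := Nat.card_pos
      rw [h2, hcardH] at h1
      have : Hσ.relIndex H = (Hσ.subgroupOf H).index := rfl
      rw [this]
      exact Nat.eq_of_mul_eq_mul_left hpos (by omega)
    rw [hrel] at hpd
    rcases (Nat.Prime.dvd_mul hp).mp hpd with h1 | h1
    · exact hτnotσ p (hHτ p hp h1) hpσ
    · exact hH.2 p hp h1 (hσπ hpσ)
  -- conjugacy
  obtain ⟨H', hH', hconj⟩ := hDπ
  obtain ⟨g0, hg0⟩ := hconj H hH.1
  -- f.range... map of H under conjugation
  set Hc := Subgroup.map ((MulAut.conj g0).toMonoidHom) H with hHc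
  have hHcle : Hc ≤ H' := by
    rintro _ ⟨x, hx, rfl⟩
    exact hg0 x hx
  have hcardHc : Nat.card Hc = Nat.card H :=
    (Nat.card_congr (Subgroup.equivMapOfInjective H _
      (MulAut.conj g0).injective).toEquiv).symm
  have hcards : Nat.card H = Nat.card H' := by
    have c1 : Nat.Coprime (Nat.card H) H'.index := pi_coprime hH.1 hH'.2
    have c2 : Nat.Coprime (Nat.card H') H.index := pi_coprime hH'.1 hH.2
    have d1 : Nat.card H ∣ Nat.card H' * H'.index := by
      rw [Subgroup.card_mul_index]; exact Subgroup.card_subgroup_dvd_card H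
    have d2 : Nat.card H' ∣ Nat.card H * H.index := by
      rw [Subgroup.card_mul_index]; exact Subgroup.card_subgroup_dvd_card H'
    exact Nat.dvd_antisymm (c1.dvd_of_dvd_mul_right d1) (c2.dvd_of_dvd_mul_right d2)
  have hHceq : Hc = H' := Subgroup.eq_of_le_of_card_ge hHcle (by rw [hcardHc, hcards])
  refine ⟨Hσ, hHallσ, ?_⟩
  intro K hK
  have hKπ : IsPiNumber π (Nat.card K) := fun p hp hpd => hσπ (hK p hp hpd)
  obtain ⟨g, hg⟩ := hconj K hKπ
  refine ⟨g0⁻¹ * g, ?_⟩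
  intro x hx
  have h1 : g * x * g⁻¹ ∈ Hc := hHceq ▸ hg x hx
  obtain ⟨h, hh, heq⟩ := h1
  simp only [MulEquiv.coe_toMonoidHom, MulAut.conj_apply] at heq
  have heq' : g0⁻¹ * g * x * (g0⁻¹ * g)⁻¹ = h := by
    have h' : h = g0⁻¹ * (g * x * g⁻¹) * g0 := by rw [← heq]; group
    rw [h']; group
  rw [show g0⁻¹ * g * x * (g0⁻¹ * g)⁻¹ = h from heq']
  apply hkey h hh
  have hordx : IsPiNumber σ (orderOf x) := by
    have : orderOf (⟨x, hx⟩ : K) ∣ Nat.card K := orderOf_dvd_natCard _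
    rw [Subgroup.orderOf_mk] at this
    exact pi_dvd hK this
  have : orderOf h = orderOf x := by
    rw [← heq', show g0⁻¹ * g * x * (g0⁻¹ * g)⁻¹ = ((MulAut.conj (g0⁻¹ * g)) x) from (MulAut.conj_apply _ _).symm]
    exact orderOf_injective (MulAut.conj (g0⁻¹ * g)).toMonoidHom (MulEquiv.injective _) x
  rw [this]
  exact hordx

theorem stmt_14 {G : Type*} [Group G] [Finite G] (π σ τ : Set ℕ)
    (hπ : ∀ p ∈ π, Nat.Prime p) (hunion : σ ∪ τ = π) (hdisj : σ ∩ τ = ∅)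
    (H Hσ Hτ : Subgroup G)
    (hH : IsHallSubgroup π H)
    (hHσ : IsPiNumber σ (Nat.card Hσ))
    (hHτ : IsPiNumber τ (Nat.card Hτ))
    (hcomm : ∀ x ∈ Hσ, ∀ y ∈ Hτ, x * y = y * x)
    (hgen : Hσ ⊔ Hτ = H)
    (hDπ : SatisfiesD G π) :
    SatisfiesD G σ ∧ SatisfiesD G τ := by
  constructor
  · exact aux π σ τ hunion hdisj H Hσ Hτ hH hHσ hHτ hcomm hgen hDπ
  · exact aux π τ σ (by rw [Set.union_comm]; exact hunion)
      (by rw [Set.inter_comm]; exact hdisj) H Hτ Hσ hH hHτ hHσ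
      (fun y hy x hx => (hcomm x hx y hy).symm) (by rw [sup_comm]; exact hgen) hDπ
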